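/- arXiv:2201.08915 — 4 statements merged into one kernel-verified Lean document; each statement's English description precedes it below -/
import Mathlib

section
/- In any alternative ring, the identity ([a,b],b,c) = [b,(a,b,c)] holds, where [x,y] = xy - yx and (x,y,z) = (xy)z - x(yz). -/
variable {A : Type*} [NonUnitalNonAssocRing A]

/-- Commutator `[x,y] = xy - yx`. -/
def altComm (x y : A) : A := x * y - y * x

/-- Associator `(x,y,z) = (xy)z - x(yz)`. -/
def altAssoc (x y z : A) : A := (x * y) * z - x * (y * z)

/-- Jordan product `x ∘ y = xy + yx`. -/
def altSop (x y : A) : A := x * y + y * x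

/-- Jacobian `J(a,b,c) = [[a,b],c] + [[b,c],a] + [[c,a],b]`. -/
def altJac (x y z : A) : A := altComm (altComm x y) z + altComm (altComm y z) x + altComm (altComm z x) y

/-- `D(a,b,c) = (a∘b)∘c - (a∘c)∘b`. -/
def altDop (x y z : A) : A := altSop (altSop x y) z - altSop (altSop x z) y

/-!
In an alternative ring the associator is alternating. Feeding this into two instances each of
the Teichmüller identity `associator_cocycle` gives `(ab, b, c) = b (a, b, c)` and
`(ba, b, c) = (a, b, c) b`; subtracting them yields the claim, since the associator is additive
in its first argument. (`altAssoc` is Mathlib's `associator` by definition, so the lemmas below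
apply to it directly.)
-/

theorem associator_sub_left (x y z w : A) :
    associator (x - y) z w = associator x z w - associator y z w := by
  simp only [associator_apply, sub_mul]
  abel

theorem associator_swap_left (hl : ∀ x y : A, associator x x y = 0) (x y z : A) :
    associator y x z = -associator x y z := by
  linear_combination (norm := skip) hl (x + y) z - hl x z - hl y z
  simp only [associator_apply, add_mul, mul_add]
  abel

theorem associator_swap_right (hr : ∀ x y : A, associator y x x = 0) (x y z : A) :
    associator x z y = -associator x y z := by
  linear_combination (norm := skip) hr (y + z) x - hr y x - hr z x
  simp only [associator_apply, add_mul, mul_add]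
  abel

theorem associator_rotate (hl : ∀ x y : A, associator x x y = 0)
    (hr : ∀ x y : A, associator y x x = 0) (x y z : A) :
    associator x y z = associator y z x := by
  rw [associator_swap_right hr y x z, associator_swap_left hl x y z, neg_neg]

theorem associator_mul_self (hl : ∀ x y : A, associator x x y = 0)
    (hr : ∀ x y : A, associator y x x = 0) (x y z : A) :
    associator (x * y) y z = y * associator x y z := by
  have h₁ := associator_cocycle x y y z
  have h₂ := associator_cocycle y y z x
  rw [← associator_rotate hl hr x (y * y) z, ← associator_rotate hl hr x y (y * z),
    ← associator_rotate hl hr x y z] at h₂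
  simp only [hl, hr, mul_zero, zero_mul] at h₁ h₂
  linear_combination (norm := abel) -h₁ - h₂

theorem associator_self_mul (hl : ∀ x y : A, associator x x y = 0)
    (hr : ∀ x y : A, associator y x x = 0) (x y z : A) :
    associator (y * x) y z = associator x y z * y := by
  have h₁ := associator_cocycle x z y y
  have h₂ := associator_cocycle z y y x
  rw [associator_rotate hl hr x (z * y) y, associator_rotate hl hr x z (y * y),
    associator_swap_right hr x y z] at h₁
  rw [associator_rotate hl hr z y (y * x), associator_swap_left hl (y * x) y z] at h₂
  simp only [hl, hr, mul_zero, zero_mul, neg_mul] at h₁ h₂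
  linear_combination (norm := abel) h₁ + h₂

theorem stmt_1
    (alt_left : ∀ x y : A, altAssoc x x y = 0)
    (alt_right : ∀ x y : A, altAssoc y x x = 0)
    (a b c : A) :
    altAssoc (altComm a b) b c = altComm b (altAssoc a b c) :=
  calc altAssoc (altComm a b) b c = associator (a * b) b c - associator (b * a) b c :=
        associator_sub_left _ _ _ _
    _ = b * associator a b c - associator a b c * b := by
        rw [associator_mul_self alt_left alt_right, associator_self_mul alt_left alt_right]
end

section
/- In any alternative ring, (a^2, b, c) = (a,b,c)∘a = (a, b∘a, c), where a∘b = ab + ba and (x,y,z) = (xy)z - x(yz). -/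
variable {A : Type*} [NonUnitalNonAssocRing A]

/-!
The Teichmüller identity `(wx,y,z) - (w,xy,z) + (w,x,yz) = w(x,y,z) + (w,x,y)z` holds in every
nonassociative ring, and in an alternative ring the associator is alternating.
Teichmüller at `(a,b,c,a)` and `(c,a,a,b)` gives `(a²,b,c) = (a,b,c)∘a`.
Teichmüller at `(a,a,b,c)` and `(c,b,a,a)` gives `(a²,b,c) = a(a,b,c) + (a,ab,c)` and
`(a²,b,c) = (a,b,c)a + (a,ba,c)`; their sum is `2(a²,b,c) = (a,b,c)∘a + (a,b∘a,c)`.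
-/

lemma altAssoc_teichmuller (w x y z : A) :
    altAssoc (w * x) y z - altAssoc w (x * y) z + altAssoc w x (y * z)
      = w * altAssoc x y z + altAssoc w x y * z := by
  simp only [altAssoc, mul_sub, sub_mul]
  abel

lemma altAssoc_add_mid (x u v z : A) :
    altAssoc x (u + v) z = altAssoc x u z + altAssoc x v z := by
  simp only [altAssoc, add_mul, mul_add]
  abel

lemma altAssoc_swap_left (hl : ∀ x y : A, altAssoc x x y = 0) (x y z : A) :
    altAssoc y x z = -altAssoc x y z := by
  have h : altAssoc (x + y) (x + y) z
      = altAssoc x x z + altAssoc x y z + altAssoc y x z + altAssoc y y z := by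
    simp only [altAssoc, add_mul, mul_add]
    abel
  rw [hl, hl, hl] at h
  linear_combination (norm := abel) -h

lemma altAssoc_swap_right (hr : ∀ x y : A, altAssoc y x x = 0) (x y z : A) :
    altAssoc x z y = -altAssoc x y z := by
  have h : altAssoc x (y + z) (y + z)
      = altAssoc x y y + altAssoc x y z + altAssoc x z y + altAssoc x z z := by
    simp only [altAssoc, add_mul, mul_add]
    abel
  rw [hr, hr, hr] at h
  linear_combination (norm := abel) -h

lemma altAssoc_rotate (hl : ∀ x y : A, altAssoc x x y = 0)
    (hr : ∀ x y : A, altAssoc y x x = 0) (x y z : A) :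
    altAssoc y z x = altAssoc x y z := by
  rw [altAssoc_swap_right hr y x z, altAssoc_swap_left hl x y z, neg_neg]

lemma altAssoc_swap_outer (hl : ∀ x y : A, altAssoc x x y = 0)
    (hr : ∀ x y : A, altAssoc y x x = 0) (x y z : A) :
    altAssoc z y x = -altAssoc x y z := by
  rw [altAssoc_rotate hl hr x z y, altAssoc_swap_right hr x y z]

lemma altAssoc_flexible (hl : ∀ x y : A, altAssoc x x y = 0)
    (hr : ∀ x y : A, altAssoc y x x = 0) (x y : A) :
    altAssoc x y x = 0 := by
  rw [altAssoc_rotate hl hr x x y, hl]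

lemma altAssoc_mul_self_left_eq_mul_add (hl : ∀ x y : A, altAssoc x x y = 0) (a b c : A) :
    altAssoc (a * a) b c = a * altAssoc a b c + altAssoc a (a * b) c := by
  have h := altAssoc_teichmuller a a b c
  rw [hl, hl, zero_mul, add_zero, add_zero] at h
  linear_combination (norm := abel) h

lemma altAssoc_mul_self_left_eq_add_mul (hl : ∀ x y : A, altAssoc x x y = 0)
    (hr : ∀ x y : A, altAssoc y x x = 0) (a b c : A) :
    altAssoc (a * a) b c = altAssoc a b c * a + altAssoc a (b * a) c := by
  have h := altAssoc_teichmuller c b a a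
  rw [hr, hr, mul_zero, zero_add, zero_sub, altAssoc_swap_outer hl hr a (b * a) c,
    altAssoc_swap_outer hl hr (a * a) b c, altAssoc_swap_outer hl hr a b c, neg_mul] at h
  linear_combination (norm := abel) -h

lemma altAssoc_mul_self_left_eq_altSop (hl : ∀ x y : A, altAssoc x x y = 0)
    (hr : ∀ x y : A, altAssoc y x x = 0) (a b c : A) :
    altAssoc (a * a) b c = altSop (altAssoc a b c) a := by
  have hcab := altAssoc_teichmuller c a a b
  rw [hl, hr, mul_zero, zero_mul, add_zero, ← altAssoc_rotate hl hr (c * a),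
    ← altAssoc_rotate hl hr c, ← altAssoc_rotate hl hr c] at hcab
  have habc := altAssoc_teichmuller a b c a
  rw [altAssoc_flexible hl hr, altAssoc_rotate hl hr a (a * b) c, altAssoc_rotate hl hr a b c,
    sub_zero] at habc
  rw [altSop]
  linear_combination (norm := abel) habc - hcab

theorem stmt_4
    (alt_left : ∀ x y : A, altAssoc x x y = 0)
    (alt_right : ∀ x y : A, altAssoc y x x = 0)
    (a b c : A) :
    altAssoc (a * a) b c = altSop (altAssoc a b c) a ∧ altSop (altAssoc a b c) a = altAssoc a (altSop b a) c := by
  have hsop := altAssoc_mul_self_left_eq_altSop alt_left alt_right a b c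
  refine ⟨hsop, ?_⟩
  have hmul_add := altAssoc_mul_self_left_eq_mul_add alt_left a b c
  have hadd_mul := altAssoc_mul_self_left_eq_add_mul alt_left alt_right a b c
  rw [altSop] at hsop ⊢
  rw [altSop, altAssoc_add_mid]
  linear_combination (norm := abel) hmul_add + hadd_mul - hsop - hsop
end

section
/- In any alternative ring, D(a,b,c) = 2(a,b,c) + [a,[b,c]], where D(a,b,c) = (a∘b)∘c - (a∘c)∘b, a∘b = ab + ba, [a,b] = ab - ba, and (x,y,z) = (xy)z - x(yz). -/
/-!
Linearizing the two alternative laws shows that the associator changes sign under a swap of its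
first two or of its last two arguments. Expanding both sides of the identity, the difference
`D(a,b,c) - 2(a,b,c) - [a,[b,c]]` is, in any nonassociative ring, a sum of four such antisymmetric
pairs of associators, and each pair vanishes.
-/

variable {A : Type*} [NonUnitalNonAssocRing A]

theorem altAssoc_add_altAssoc_swap_left (alt_left : ∀ x y : A, altAssoc x x y = 0)
    (x y z : A) : altAssoc x y z + altAssoc y x z = 0 := by
  have hxy := alt_left (x + y) z
  have hx := alt_left x z
  have hy := alt_left y z
  simp only [altAssoc, add_mul, mul_add] at hxy hx hy ⊢
  linear_combination (norm := abel) hxy - hx - hy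

theorem altAssoc_add_altAssoc_swap_right (alt_right : ∀ x y : A, altAssoc y x x = 0)
    (x y z : A) : altAssoc x y z + altAssoc x z y = 0 := by
  have hyz := alt_right (y + z) x
  have hy := alt_right y x
  have hz := alt_right z x
  simp only [altAssoc, add_mul, mul_add] at hyz hy hz ⊢
  linear_combination (norm := abel) hyz - hy - hz

theorem altDop_eq_two_smul_altAssoc_add_altComm_add (a b c : A) :
    altDop a b c = 2 • altAssoc a b c + altComm a (altComm b c)
      - (altAssoc a b c + altAssoc b a c) - (altAssoc c a b + altAssoc a c b)
      + 2 • (altAssoc b c a + altAssoc b a c) - (altAssoc c b a + altAssoc b c a) := by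
  simp only [altDop, altSop, altAssoc, altComm, add_mul, mul_add, sub_mul, mul_sub]
  abel

theorem stmt_10
    (alt_left : ∀ x y : A, altAssoc x x y = 0)
    (alt_right : ∀ x y : A, altAssoc y x x = 0)
    (a b c : A) :
    altDop a b c = 2 • altAssoc a b c + altComm a (altComm b c) := by
  have swap_left := altAssoc_add_altAssoc_swap_left alt_left
  rw [altDop_eq_two_smul_altAssoc_add_altComm_add, swap_left a b c, swap_left c a b,
    altAssoc_add_altAssoc_swap_right alt_right b c a, swap_left c b a]
  simp only [smul_zero, sub_zero, add_zero]
end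

section
/- In any alternative ring, [a^2, [a, x]] = [a, [a^2, x]], where [a,b] = ab - ba; that is, the δ-identity δ[a^2,[a,x]] = 0 holds. -/
variable {A : Type*} [NonUnitalNonAssocRing A]

theorem mul_self_mul_of_alternative (alt_left : ∀ x y : A, altAssoc x x y = 0) (a y : A) :
    a * a * y = a * (a * y) :=
  sub_eq_zero.mp (alt_left a y)

theorem mul_mul_self_of_alternative (alt_right : ∀ x y : A, altAssoc y x x = 0) (a y : A) :
    y * (a * a) = y * a * a :=
  (sub_eq_zero.mp (alt_right a y)).symm

/-- Alternative rings are flexible: linearize right alternativity at `y + a`. -/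
theorem flexible_of_alternative (alt_left : ∀ x y : A, altAssoc x x y = 0)
    (alt_right : ∀ x y : A, altAssoc y x x = 0) (a y : A) : a * y * a = a * (y * a) := by
  have h := alt_right (y + a) a
  have h₁ := alt_right y a
  have h₂ := alt_right a a
  have h₃ := alt_left a y
  simp only [altAssoc, mul_add, add_mul] at h h₁ h₂ h₃
  linear_combination (norm := abel) h - h₁ - h₂ - h₃

theorem isJordan_of_alternative (alt_left : ∀ x y : A, altAssoc x x y = 0)
    (alt_right : ∀ x y : A, altAssoc y x x = 0) : IsJordan A where
  lmul_comm_rmul := flexible_of_alternative alt_left alt_right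
  lmul_lmul_comm_lmul a b := by
    rw [mul_self_mul_of_alternative alt_left, mul_self_mul_of_alternative alt_left]
  lmul_lmul_comm_rmul a b := by
    rw [mul_self_mul_of_alternative alt_left, mul_self_mul_of_alternative alt_left,
      flexible_of_alternative alt_left alt_right, flexible_of_alternative alt_left alt_right]
  lmul_comm_rmul_rmul a b := by
    rw [mul_mul_self_of_alternative alt_right, mul_mul_self_of_alternative alt_right,
      flexible_of_alternative alt_left alt_right, flexible_of_alternative alt_left alt_right]
  rmul_comm_rmul_rmul a b := by
    rw [mul_mul_self_of_alternative alt_right, mul_mul_self_of_alternative alt_right]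

local notation "L" => AddMonoid.End.mulLeft

local notation "R" => AddMonoid.End.mulRight

/-- `[a², -]` and `[a, -]` are `L a² - R a²` and `L a - R a`, which commute in a Jordan ring. -/
theorem altComm_mul_self_altComm [IsJordan A] (a x : A) :
    altComm (a * a) (altComm a x) = altComm a (altComm (a * a) x) := by
  have hcomm : Commute (L a - R a) (L (a * a) - R (a * a)) :=
    ((commute_lmul_lmul_sq a).sub_right (commute_lmul_rmul_sq a)).sub_left
      ((commute_lmul_sq_rmul a).symm.sub_right (commute_rmul_rmul_sq a))
  exact DFunLike.congr_fun hcomm.eq.symm x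

theorem stmt_12
    (alt_left : ∀ x y : A, altAssoc x x y = 0)
    (alt_right : ∀ x y : A, altAssoc y x x = 0)
    (a x : A) :
    altComm (a * a) (altComm a x) = altComm a (altComm (a * a) x) :=
  haveI := isJordan_of_alternative alt_left alt_right
  altComm_mul_self_altComm a x
end
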